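/- arXiv:1005.4043 — 3 statements merged into one kernel-verified Lean document; each statement's English description precedes it below -/
import Mathlib

section
/- For every multi-index I ∈ {1,…,m}^n: D(φ^I_1) = φ^{(1)I}_m + φ^{I(1)}_m + (−1)^{|I|+1} φ^I_1 ∘ d, and for every x ≠ 1, D(φ^I_x) = (−1)^{|I|+|x|+1} φ^I_x ∘ d. -/
open Finsupp Submodule LinearMap

set_option maxSynthPendingDepth 2

namespace NilpotentCohomology

/-- The big space of cochains of all degrees: formal ℂ-linear combinations of
basis symbols `φ^I_x` indexed by a multi-index `I : List (Fin m)` and an output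
index `x : Fin m`. -/
abbrev Cochain (m : ℕ) : Type := (List (Fin m) × Fin m) →₀ ℂ

/-- Parity of an index: `0` if the index is among the first `r` (even) ones, `1` otherwise. -/
def par (r : ℕ) {m : ℕ} (i : Fin m) : ℕ := if (i : ℕ) < r then 0 else 1

/-- Parity of a multi-index: the sum of the parities of its entries. -/
def lpar (r : ℕ) {m : ℕ} (I : List (Fin m)) : ℕ := (I.map (par r)).sum

/-- Parity of a basis cochain `φ^I_x`: `|I| + |x|`. -/
def ppar (r : ℕ) {m : ℕ} (p : List (Fin m) × Fin m) : ℕ := lpar r p.1 + par r p.2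

/-- `(I, J, k)`: the multi-index `I` with its `k`-th entry (0-indexed) replaced by the string `J`. -/
def insertAt {m : ℕ} (I J : List (Fin m)) (k : ℕ) : List (Fin m) :=
  I.take k ++ J ++ I.drop (k + 1)

/-- The insertion product of two basis cochains `φ^I_x ∘ φ^J_y`. -/
noncomputable def basisComp (r : ℕ) {m : ℕ} (p q : List (Fin m) × Fin m) : Cochain m :=
  ∑ k : Fin p.1.length,
    if p.1.get k = q.2 then
      ((-1 : ℂ) ^ (lpar r (p.1.take ((k : ℕ) + 1)) * ppar r q)) •
        Finsupp.single (insertAt p.1 q.1 (k : ℕ), p.2) (1 : ℂ)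
    else 0

/-- The insertion product, extended bilinearly. -/
noncomputable def comp (r : ℕ) {m : ℕ} :
    Cochain m →ₗ[ℂ] Cochain m →ₗ[ℂ] Cochain m :=
  Finsupp.lsum ℂ fun p => LinearMap.toSpanSingleton ℂ _
    (Finsupp.lsum ℂ fun q => LinearMap.toSpanSingleton ℂ (Cochain m) (basisComp r p q))

/-- The bracket `[φ, ψ] = φ∘ψ − (−1)^{|φ||ψ|} ψ∘φ` of two parity-homogeneous cochains
of parities `pf` and `pg`. -/
noncomputable def bracket (r : ℕ) {m : ℕ} (pf pg : ℕ) (f g : Cochain m) : Cochain m :=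
  comp r f g - ((-1 : ℂ) ^ (pf * pg)) • comp r g f

/-- The quadratic cochain `φ^{(a,a)}_b`. -/
noncomputable def dd {m : ℕ} (a b : Fin m) : Cochain m :=
  Finsupp.single ([a, a], b) (1 : ℂ)

/-- The linear map multiplying each basis cochain by `(−1)^{its parity}`. -/
noncomputable def twist (r : ℕ) {m : ℕ} : Cochain m →ₗ[ℂ] Cochain m :=
  Finsupp.lsum ℂ fun p => LinearMap.toSpanSingleton ℂ (Cochain m)
    (((-1 : ℂ) ^ (ppar r p)) • Finsupp.single p (1 : ℂ))

/-- The coboundary operator `D(φ) = [d, φ] = d∘φ − (−1)^{|d||φ|} φ∘d` for the odd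
codifferential `d = φ^{(a,a)}_b`, extended linearly from parity-homogeneous `φ`. -/
noncomputable def Dop (r : ℕ) {m : ℕ} (a b : Fin m) : Cochain m →ₗ[ℂ] Cochain m :=
  comp r (dd a b) - ((comp r).flip (dd a b)) ∘ₗ twist r

/-- `C^n`: the span of the basis cochains `φ^I_x` with `I` of length `n`. -/
noncomputable def Cn (m n : ℕ) : Submodule ℂ (Cochain m) :=
  Submodule.span ℂ
    {f | ∃ I : List (Fin m), I.length = n ∧ ∃ x : Fin m, f = Finsupp.single (I, x) 1}

/-- `C^n_x`: the span of the basis cochains `φ^I_x` with `I` of length `n` and output `x`. -/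
noncomputable def Cnx (m : ℕ) (n : ℕ) (x : Fin m) : Submodule ℂ (Cochain m) :=
  Submodule.span ℂ
    {f | ∃ I : List (Fin m), I.length = n ∧ f = Finsupp.single (I, x) 1}

/-- The projection onto the cochains with output index `x`. -/
noncomputable def projOut {m : ℕ} (x : Fin m) : Cochain m →ₗ[ℂ] Cochain m :=
  Finsupp.lsum ℂ fun p => LinearMap.toSpanSingleton ℂ (Cochain m)
    (if p.2 = x then Finsupp.single p (1 : ℂ) else 0)

/-- `λ^J (φ^I_x) = φ^{JI}_x`, extended linearly. -/
noncomputable def lam {m : ℕ} (J : List (Fin m)) : Cochain m →ₗ[ℂ] Cochain m :=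
  Finsupp.lsum ℂ fun p => LinearMap.toSpanSingleton ℂ (Cochain m)
    (Finsupp.single (J ++ p.1, p.2) (1 : ℂ))

/-- `ρ^J (φ^I_x) = (−1)^{|I||J|} φ^{IJ}_x`, extended linearly. -/
noncomputable def rho (r : ℕ) {m : ℕ} (J : List (Fin m)) : Cochain m →ₗ[ℂ] Cochain m :=
  Finsupp.lsum ℂ fun p => LinearMap.toSpanSingleton ℂ (Cochain m)
    (((-1 : ℂ) ^ (lpar r p.1 * lpar r J)) • Finsupp.single (p.1 ++ J, p.2) (1 : ℂ))

/-- `θ = λ^{(a,b)} − λ^{(b,a)}`. -/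
noncomputable def theta {m : ℕ} (a b : Fin m) : Cochain m →ₗ[ℂ] Cochain m :=
  lam [a, b] - lam [b, a]

/-- `τ`: swaps the outputs `a` and `b` of basis cochains (identity on other outputs). -/
noncomputable def tau {m : ℕ} (a b : Fin m) : Cochain m →ₗ[ℂ] Cochain m :=
  Finsupp.lsum ℂ fun p => LinearMap.toSpanSingleton ℂ (Cochain m)
    (Finsupp.single (p.1, if p.2 = a then b else if p.2 = b then a else p.2) (1 : ℂ))

/-! ### Full cohomology -/

/-- Cocycles of degree `n` of the full complex. -/
noncomputable def Zfull (r : ℕ) {m : ℕ} (a b : Fin m) (n : ℕ) : Submodule ℂ (Cochain m) :=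
  Cn m n ⊓ LinearMap.ker (Dop r a b)

/-- Coboundaries of degree `n` of the full complex (`C^{-1} = 0`). -/
noncomputable def Bfull (r : ℕ) {m : ℕ} (a b : Fin m) : ℕ → Submodule ℂ (Cochain m)
  | 0 => ⊥
  | n + 1 => Submodule.map (Dop r a b) (Cn m n)

/-- The full cohomology `H^n = Z^n / B^n`. -/
noncomputable abbrev Hfull (r : ℕ) {m : ℕ} (a b : Fin m) (n : ℕ) : Type :=
  Zfull r a b n ⧸ (Bfull r a b n).comap (Zfull r a b n).subtype

/-! ### The restricted complexes -/

/-- The restricted differential `D_x`: the `e₁`-output component of `D` when `x = a`,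
and `D` itself (which preserves output `x`) otherwise. -/
noncomputable def Dx (r : ℕ) {m : ℕ} (a b x : Fin m) : Cochain m →ₗ[ℂ] Cochain m :=
  if x = a then projOut a ∘ₗ Dop r a b else Dop r a b

/-- Cocycles of the restricted complex `(C^•_x, D_x)`. -/
noncomputable def Zx (r : ℕ) {m : ℕ} (a b x : Fin m) (n : ℕ) : Submodule ℂ (Cochain m) :=
  Cnx m n x ⊓ LinearMap.ker (Dx r a b x)

/-- Coboundaries of the restricted complex `(C^•_x, D_x)` (`C^{-1}_x = 0`). -/
noncomputable def Bx (r : ℕ) {m : ℕ} (a b x : Fin m) : ℕ → Submodule ℂ (Cochain m)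
  | 0 => ⊥
  | n + 1 => Submodule.map (Dx r a b x) (Cnx m n x)

/-- Cohomology `H^n_x` of the restricted complex `(C^•_x, D_x)`. -/
noncomputable abbrev Hx (r : ℕ) {m : ℕ} (a b x : Fin m) (n : ℕ) : Type :=
  Zx r a b x n ⧸ (Bx r a b x n).comap (Zx r a b x n).subtype

/-! ### The subcomplex `C^•_a ⊕ C^•_b` and the `b`-output complex -/

/-- `C^n_a ⊕ C^n_b` (internal direct sum). -/
noncomputable def Cpair (m : ℕ) (a b : Fin m) (n : ℕ) : Submodule ℂ (Cochain m) :=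
  Cnx m n a ⊔ Cnx m n b

noncomputable def Zpair (r : ℕ) {m : ℕ} (a b : Fin m) (n : ℕ) : Submodule ℂ (Cochain m) :=
  Cpair m a b n ⊓ LinearMap.ker (Dop r a b)

noncomputable def Bpair (r : ℕ) {m : ℕ} (a b : Fin m) : ℕ → Submodule ℂ (Cochain m)
  | 0 => ⊥
  | n + 1 => Submodule.map (Dop r a b) (Cpair m a b n)

/-- `H^n`: the cohomology of the subcomplex `(C^•_a ⊕ C^•_b, D)`. -/
noncomputable abbrev Hpair (r : ℕ) {m : ℕ} (a b : Fin m) (n : ℕ) : Type :=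
  Zpair r a b n ⧸ (Bpair r a b n).comap (Zpair r a b n).subtype

/-- Cocycles of `(C^•_b, D_b)`, where `D_b` is the restriction of `D`. -/
noncomputable def Zm (r : ℕ) {m : ℕ} (a b : Fin m) (n : ℕ) : Submodule ℂ (Cochain m) :=
  Cnx m n b ⊓ LinearMap.ker (Dop r a b)

noncomputable def Bm (r : ℕ) {m : ℕ} (a b : Fin m) : ℕ → Submodule ℂ (Cochain m)
  | 0 => ⊥
  | n + 1 => Submodule.map (Dop r a b) (Cnx m n b)

/-- `H^n_b`: the cohomology of `(C^•_b, D_b)`. -/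
noncomputable abbrev Hm (r : ℕ) {m : ℕ} (a b : Fin m) (n : ℕ) : Type :=
  Zm r a b n ⧸ (Bm r a b n).comap (Zm r a b n).subtype

lemma Zm_le_Zpair (r : ℕ) {m : ℕ} (a b : Fin m) (n : ℕ) :
    Zm r a b n ≤ Zpair r a b n :=
  inf_le_inf le_sup_right le_rfl

lemma Bm_le_Bpair (r : ℕ) {m : ℕ} (a b : Fin m) : ∀ n : ℕ, Bm r a b n ≤ Bpair r a b n
  | 0 => bot_le
  | _ + 1 => Submodule.map_mono le_sup_right

/-- The natural map `H^n_b → H^n` induced by the inclusion of cocycles. -/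
noncomputable def iotaHm (r : ℕ) {m : ℕ} (a b : Fin m) (n : ℕ) :
    Hm r a b n →ₗ[ℂ] Hpair r a b n :=
  Submodule.mapQ _ _ (Submodule.inclusion (Zm_le_Zpair r a b n))
    (fun z hz => Bm_le_Bpair r a b n hz)

/-- `Ĥ^n_f`: the image of `H^n_b` in `H^n`. -/
noncomputable def Hfhat (r : ℕ) {m : ℕ} (a b : Fin m) (n : ℕ) : Submodule ℂ (Hpair r a b n) :=
  LinearMap.range (iotaHm r a b n)

/-- `Ĥ^n_e = H^n / Ĥ^n_f`. -/
noncomputable abbrev Hehat (r : ℕ) {m : ℕ} (a b : Fin m) (n : ℕ) : Type :=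
  Hpair r a b n ⧸ Hfhat r a b n

/-! ### The spaces `Ĉ^n_x` of nontrivial cocycles -/

/-- The recursively defined subspaces `Ĉ^n_x` of nontrivial cocycles. -/
noncomputable def Chat (r : ℕ) {m : ℕ} (a b x : Fin m) : ℕ → Submodule ℂ (Cochain m)
  | 0 => Submodule.span ℂ {Finsupp.single (([] : List (Fin m)), x) 1}
  | 1 => Submodule.span ℂ
      ({Finsupp.single ([a], x) 1} ∪
        ⋃ c ∈ {c : Fin m | c ≠ a ∧ c ≠ b}, lam [c] '' (Chat r a b x 0 : Set (Cochain m)))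
  | n + 2 => Submodule.span ℂ
      ((⋃ c ∈ {c : Fin m | c ≠ a ∧ c ≠ b},
          lam [c] '' (Chat r a b x (n + 1) : Set (Cochain m))) ∪
        (theta a b '' (Chat r a b x n : Set (Cochain m))) ∪
        ⋃ c ∈ {c : Fin m | c ≠ a ∧ c ≠ b},
          (lam [a] + rho r [a]) '' (lam [c] '' (Chat r a b x n : Set (Cochain m))))


lemma comp_single_single (r : ℕ) {m : ℕ} (p q : List (Fin m) × Fin m) :
    comp r (Finsupp.single p (1:ℂ)) (Finsupp.single q 1) = basisComp r p q := by
  simp [comp]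

lemma twist_single (r : ℕ) {m : ℕ} (p : List (Fin m) × Fin m) :
    twist r (Finsupp.single p (1:ℂ)) = ((-1:ℂ) ^ ppar r p) • Finsupp.single p 1 := by
  simp [twist, toSpanSingleton_apply]

lemma Dop_single (r : ℕ) {m : ℕ} (a b : Fin m) (p : List (Fin m) × Fin m) :
    Dop r a b (Finsupp.single p (1:ℂ)) =
      basisComp r ([a,a],b) p -
        ((-1:ℂ) ^ ppar r p) • comp r (Finsupp.single p 1) (dd a b) := by
  simp only [Dop, LinearMap.sub_apply, LinearMap.comp_apply, twist_single,
    LinearMap.flip_apply, map_smul, LinearMap.smul_apply, dd, comp_single_single]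

lemma basisComp_dd (r : ℕ) {m : ℕ} (a b : Fin m) (ha : par r a = 0)
    (I : List (Fin m)) (x : Fin m) :
    basisComp r ([a,a],b) (I,x) =
      if a = x then
        Finsupp.single (I ++ [a], b) 1 + Finsupp.single (a :: I, b) 1
      else 0 := by
  simp [basisComp, Fin.sum_univ_two, insertAt, lpar, ha]
  split <;> simp

/-- `D(φ^I_{e₁}) = φ^{(1)I}_{f_s} + φ^{I(1)}_{f_s} + (−1)^{|I|+1} φ^I_{e₁} ∘ d`,
and for `x ≠ e₁`, `D(φ^I_x) = (−1)^{|I|+|x|+1} φ^I_x ∘ d`. -/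
theorem Dop_on_basis (r s : ℕ) (hr : 1 ≤ r) (hs : 1 ≤ s)
    (e1 fs : Fin (r + s)) (he1 : (e1 : ℕ) = 0) (hfs : (fs : ℕ) = r + s - 1) :
    ∀ I : List (Fin (r + s)),
      (Dop r e1 fs (Finsupp.single (I, e1) 1) =
        Finsupp.single (e1 :: I, fs) 1 + Finsupp.single (I ++ [e1], fs) 1 +
          ((-1 : ℂ) ^ (lpar r I + 1)) • comp r (Finsupp.single (I, e1) 1) (dd e1 fs)) ∧
      ∀ x : Fin (r + s), x ≠ e1 →
        Dop r e1 fs (Finsupp.single (I, x) 1) =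
          ((-1 : ℂ) ^ (lpar r I + par r x + 1)) •
            comp r (Finsupp.single (I, x) 1) (dd e1 fs) := by
  have ha : par r e1 = 0 := by simp [par, he1]; omega
  intro I
  constructor
  · rw [Dop_single, basisComp_dd r e1 fs ha, if_pos rfl]
    simp only [ppar, ha, add_zero, pow_succ, mul_neg_one, neg_smul, sub_eq_add_neg]
    abel
  · intro x hx
    rw [Dop_single, basisComp_dd r e1 fs ha, if_neg (fun h => hx h.symm)]
    simp only [ppar, pow_succ, mul_neg_one, neg_smul, zero_sub]


end NilpotentCohomology
end

section
/- For every x ∈ {1,…,m} and every n ≥ 0, dim_ℂ Ĉ^n_x = (r+s−1)^n. -/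
/-! The proof uses the left derivative `∂_c φ^{cI}_y = φ^I_y` of multi-indices. It is a left
inverse of `λ^c`, kills `λ^{c'}` for `c' ≠ c`, and kills `ρ^a λ^c` for `c ≠ a` since `ρ^a` only
appends. Applying `∂_a` to a relation `∑ λ^c u_c + θ v + ∑ (λ^a + ρ^a) λ^c w_c = 0` (with `c`
running over the letters other than `a = 1`, `b = m`) leaves `λ^b v + ∑ λ^c w_c = 0`, and `∂_b`,
`∂_c` then separate all components. So the generators of `Ĉ^{n+2}_x` parametrize it injectively,
`dim Ĉ^{n+2} = (m - 2) dim Ĉ^{n+1} + (m - 1) dim Ĉ^n`, and with `dim Ĉ^0 = 1`,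
`dim Ĉ^1 = m - 1` this gives `(m - 1)^n`. -/

open Finsupp Submodule LinearMap

set_option maxSynthPendingDepth 2

namespace NilpotentCohomology

variable {m : ℕ}

lemma lam_single (J : List (Fin m)) (p : List (Fin m) × Fin m) (t : ℂ) :
    lam J (Finsupp.single p t) = Finsupp.single (J ++ p.1, p.2) t := by
  simp [lam]

noncomputable def lderiv (c : Fin m) : Cochain m →ₗ[ℂ] Cochain m :=
  Finsupp.lcomapDomain (fun p : List (Fin m) × Fin m => (c :: p.1, p.2)) fun p q h => by
    simpa [Prod.ext_iff] using h

lemma lderiv_apply (c : Fin m) (φ : Cochain m) (p : List (Fin m) × Fin m) :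
    lderiv c φ p = φ (c :: p.1, p.2) :=
  rfl

lemma lderiv_lam_self (c : Fin m) (φ : Cochain m) : lderiv c (lam [c] φ) = φ := by
  suffices lderiv c ∘ₗ lam [c] = LinearMap.id from LinearMap.congr_fun this φ
  refine Finsupp.lhom_ext fun p t => Finsupp.ext fun q => ?_
  simp [lderiv_apply, lam_single, Finsupp.single_apply, Prod.ext_iff]

lemma lderiv_lam_of_ne {c d : Fin m} (h : c ≠ d) (φ : Cochain m) : lderiv d (lam [c] φ) = 0 := by
  suffices lderiv d ∘ₗ lam [c] = 0 from LinearMap.congr_fun this φ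
  refine Finsupp.lhom_ext fun p t => Finsupp.ext fun q => ?_
  simp [lderiv_apply, lam_single, Prod.ext_iff, h]

lemma lderiv_rho_lam_of_ne (r : ℕ) (J : List (Fin m)) {c d : Fin m} (h : c ≠ d)
    (φ : Cochain m) : lderiv d (rho r J (lam [c] φ)) = 0 := by
  suffices lderiv d ∘ₗ rho r J ∘ₗ lam [c] = 0 from LinearMap.congr_fun this φ
  refine Finsupp.lhom_ext fun p t => Finsupp.ext fun q => ?_
  simp [rho, lderiv_apply, lam_single, Prod.ext_iff, h]

lemma lderiv_theta {a b : Fin m} (hab : a ≠ b) (φ : Cochain m) :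
    lderiv a (theta a b φ) = lam [b] φ := by
  suffices lderiv a ∘ₗ theta a b = lam [b] from LinearMap.congr_fun this φ
  refine Finsupp.lhom_ext fun p t => Finsupp.ext fun q => ?_
  simp [theta, lderiv_apply, lam_single, Finsupp.single_apply, Prod.ext_iff, hab]

lemma lderiv_sum_lam {ι : Type*} [Fintype ι] {ℓ : ι → Fin m} (hℓ : Function.Injective ℓ)
    (u : ι → Cochain m) (i : ι) : lderiv (ℓ i) (∑ j, lam [ℓ j] (u j)) = u i := by
  rw [map_sum, Finset.sum_eq_single i (fun j _ hji => lderiv_lam_of_ne (hℓ.ne hji) _)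
    (by simp), lderiv_lam_self]

lemma lderiv_sum_lam_of_ne {ι : Type*} [Fintype ι] {ℓ : ι → Fin m} {d : Fin m}
    (hd : ∀ i, ℓ i ≠ d) (u : ι → Cochain m) : lderiv d (∑ j, lam [ℓ j] (u j)) = 0 := by
  simp [lderiv_lam_of_ne (hd _)]

lemma eq_zero_of_sum_lam_eq_zero {ι : Type*} [Fintype ι] {ℓ : ι → Fin m}
    (hℓ : Function.Injective ℓ) {u : ι → Cochain m} (h : ∑ i, lam [ℓ i] (u i) = 0) : u = 0 :=
  funext fun i => by rw [← lderiv_sum_lam hℓ u i, h, map_zero, Pi.zero_apply]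

abbrev Mid (a b : Fin m) : Type := {c : Fin m // c ≠ a ∧ c ≠ b}

lemma card_mid {a b : Fin m} (hab : a ≠ b) : Fintype.card (Mid a b) = m - 2 := by
  have hmid :
      (Finset.univ.filter fun c : Fin m => c ≠ a ∧ c ≠ b) = (Finset.univ.erase a).erase b := by
    ext c; simp [and_comm]
  rw [Fintype.card_subtype, hmid, Finset.card_erase_of_mem (by simp [hab.symm]),
    Finset.card_erase_of_mem (Finset.mem_univ _), Finset.card_univ, Fintype.card_fin]
  omega

lemma range_lsum_comp_subtype {R M N ι : Type*} [CommSemiring R] [AddCommMonoid M] [Module R M]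
    [AddCommMonoid N] [Module R N] [Fintype ι] [DecidableEq ι] (F : ι → M →ₗ[R] N)
    (p : Submodule R M) :
    range (LinearMap.lsum R (fun _ => p) ℕ fun i => F i ∘ₗ p.subtype) = ⨆ i, p.map (F i) := by
  apply le_antisymm
  · rintro _ ⟨u, rfl⟩
    simp only [LinearMap.lsum_apply, LinearMap.coe_sum, Finset.sum_apply]
    exact Submodule.sum_mem _ fun i _ =>
      Submodule.mem_iSup_of_mem i (Submodule.mem_map_of_mem (u i).2)
  · refine iSup_le fun i => ?_
    rintro _ ⟨y, hy, rfl⟩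
    exact ⟨Pi.single i ⟨y, hy⟩, by simp [Pi.single_apply, apply_ite]⟩

variable (r : ℕ) (a b x : Fin m)

noncomputable def chatParam (P Q : Submodule ℂ (Cochain m)) :
    ((Mid a b → P) × Q × (Mid a b → Q)) →ₗ[ℂ] Cochain m :=
  (LinearMap.lsum ℂ (fun _ => P) ℕ fun c => lam [c.1] ∘ₗ P.subtype).coprod
    ((theta a b ∘ₗ Q.subtype).coprod
      (LinearMap.lsum ℂ (fun _ => Q) ℕ fun c => ((lam [a] + rho r [a]) ∘ₗ lam [c.1]) ∘ₗ Q.subtype))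

noncomputable def chatParamOne (P : Submodule ℂ (Cochain m)) :
    (ℂ × (Mid a b → P)) →ₗ[ℂ] Cochain m :=
  (LinearMap.toSpanSingleton ℂ _ (Finsupp.single ([a], x) 1)).coprod
    (LinearMap.lsum ℂ (fun _ => P) ℕ fun c => lam [c.1] ∘ₗ P.subtype)

variable {a b}

lemma chatParam_injective (hab : a ≠ b) (P Q : Submodule ℂ (Cochain m)) :
    Function.Injective (chatParam r a b P Q) := by
  rw [← LinearMap.ker_eq_bot, LinearMap.ker_eq_bot']
  rintro ⟨u, v, w⟩ h
  simp only [chatParam, LinearMap.coprod_apply, LinearMap.lsum_apply, LinearMap.coe_sum,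
    Finset.sum_apply, LinearMap.comp_apply, LinearMap.coe_proj, Function.eval,
    Submodule.subtype_apply] at h
  have hab' : ∀ c : Mid a b, c.1 ≠ a := fun c => c.2.1
  have hvw : lam [b] v + ∑ c : Mid a b, lam [c.1] (w c) = 0 := by
    simpa [lderiv_sum_lam_of_ne hab', lderiv_theta hab, lderiv_lam_self,
      lderiv_rho_lam_of_ne _ _ (hab' _)] using congrArg (lderiv a) h
  have hv : v = 0 := Subtype.ext <| by
    simpa [lderiv_lam_self, lderiv_sum_lam_of_ne fun c : Mid a b => c.2.2] using
      congrArg (lderiv b) hvw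
  have hw : w = 0 := funext fun c => Subtype.ext <| congrFun
    (eq_zero_of_sum_lam_eq_zero Subtype.val_injective (u := fun c => (w c : Cochain m))
      (by simpa [hv] using hvw)) c
  have hu : u = 0 := funext fun c => Subtype.ext <| congrFun
    (eq_zero_of_sum_lam_eq_zero Subtype.val_injective (u := fun c => (u c : Cochain m))
      (by simpa [hv, hw] using h)) c
  simp [hu, hv, hw]

lemma chatParamOne_injective (P : Submodule ℂ (Cochain m)) :
    Function.Injective (chatParamOne a b x P) := by
  rw [← LinearMap.ker_eq_bot, LinearMap.ker_eq_bot']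
  rintro ⟨t, u⟩ h
  simp only [chatParamOne, LinearMap.coprod_apply, LinearMap.lsum_apply, LinearMap.coe_sum,
    Finset.sum_apply, LinearMap.comp_apply, LinearMap.coe_proj, Function.eval,
    Submodule.subtype_apply, LinearMap.toSpanSingleton_apply] at h
  have ht : t = 0 := by
    have := congrArg (lderiv a) h
    rw [show Finsupp.single ([a], x) (1 : ℂ) = lam [a] (Finsupp.single ([], x) 1) by
      simp [lam_single]] at this
    simpa [lderiv_lam_self, lderiv_sum_lam_of_ne fun c : Mid a b => c.2.1] using this
  have hu : u = 0 := funext fun c => Subtype.ext <| congrFun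
    (eq_zero_of_sum_lam_eq_zero Subtype.val_injective (u := fun c => (u c : Cochain m))
      (by simpa [ht] using h)) c
  simp [ht, hu]

lemma chat_one_eq_range :
    Chat r a b x 1 = range (chatParamOne a b x (Chat r a b x 0)) := by
  conv_lhs => rw [Chat]
  rw [chatParamOne, LinearMap.range_coprod, LinearMap.range_toSpanSingleton,
    range_lsum_comp_subtype, Submodule.span_union]
  simp only [Submodule.span_iUnion₂, Submodule.span_image, Submodule.span_eq, iSup_subtype']
  rfl

lemma chat_add_two_eq_range (n : ℕ) :
    Chat r a b x (n + 2) = range (chatParam r a b (Chat r a b x (n + 1)) (Chat r a b x n)) := by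
  rw [Chat, chatParam, LinearMap.range_coprod, LinearMap.range_coprod, range_lsum_comp_subtype,
    range_lsum_comp_subtype, LinearMap.range_comp, Submodule.range_subtype, Submodule.span_union,
    Submodule.span_union, sup_assoc]
  simp only [Submodule.span_iUnion₂, Submodule.span_image, Submodule.span_eq, iSup_subtype',
    Set.image_image, ← LinearMap.comp_apply]
  rfl

theorem finrank_chat (hab : a ≠ b) : ∀ n, Module.finrank ℂ (Chat r a b x n) = (m - 1) ^ n
  | 0 => by
    rw [Chat, finrank_span_singleton (Finsupp.single_ne_zero.mpr one_ne_zero), pow_zero]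
  | 1 => by
    have h0 := finrank_chat hab 0
    have : Module.Finite ℂ (Chat r a b x 0) := Module.finite_of_finrank_pos (by simp [h0])
    rw [chat_one_eq_range, LinearMap.finrank_range_of_inj (chatParamOne_injective x _),
      Module.finrank_prod, Module.finrank_self, Module.finrank_pi_fintype, h0]
    simp only [Finset.sum_const, Finset.card_univ, card_mid hab, smul_eq_mul, pow_zero, pow_one,
      mul_one]
    omega
  | n + 2 => by
    have h1 := finrank_chat hab (n + 1)
    have h0 := finrank_chat hab n
    have hm : 2 ≤ m := by have := a.2; have := b.2; have := Fin.val_ne_of_ne hab; omega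
    have : Module.Finite ℂ (Chat r a b x (n + 1)) :=
      Module.finite_of_finrank_pos (by rw [h1]; exact pow_pos (by omega) _)
    have : Module.Finite ℂ (Chat r a b x n) :=
      Module.finite_of_finrank_pos (by rw [h0]; exact pow_pos (by omega) _)
    rw [chat_add_two_eq_range, LinearMap.finrank_range_of_inj (chatParam_injective r hab _ _),
      Module.finrank_prod, Module.finrank_prod, Module.finrank_pi_fintype,
      Module.finrank_pi_fintype, h0, h1]
    simp only [Finset.sum_const, Finset.card_univ, card_mid hab, smul_eq_mul]
    obtain ⟨k, rfl⟩ : ∃ k, m = k + 2 := ⟨m - 2, by omega⟩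
    simp only [Nat.add_sub_cancel, show k + 2 - 1 = k + 1 by omega]
    ring

/-- `dim Ĉ^n_x = (r+s−1)^n` for every output `x` and every `n`. -/
theorem Chat_dim (r s : ℕ) (hr : 1 ≤ r) (hs : 1 ≤ s)
    (e1 fs : Fin (r + s)) (he1 : (e1 : ℕ) = 0) (hfs : (fs : ℕ) = r + s - 1) :
    ∀ x : Fin (r + s), ∀ n : ℕ,
      Module.finrank ℂ (Chat r e1 fs x n) = (r + s - 1) ^ n :=
  fun x => finrank_chat r x (Fin.ne_of_val_ne (by omega))

end NilpotentCohomology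
end

section
/- Let p ≥ 2 be an integer and let c : ℕ → ℕ be a sequence with c_0 = 0, c_1 ≥ 1, and c_{n+2} ≥ c_n + (p−1)p^{n+1} for all n ≥ 0. Then c_{n+1} + c_n ≥ p^{n+1} − (p−1)^{n+1} for all n ≥ 0. -/
/-- if `c₀ = 0`, `c₁ ≥ 1` and `c_{n+2} ≥ c_n + (p−1)p^{n+1}` for all `n`,
with `p ≥ 2`, then `c_{n+1} + c_n ≥ p^{n+1} − (p−1)^{n+1}` for all `n`. -/
theorem coboundary_recursion_bound (p : ℕ) (hp : 2 ≤ p) (c : ℕ → ℕ)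
    (h0 : c 0 = 0) (h1 : 1 ≤ c 1)
    (h2 : ∀ n : ℕ, c n + (p - 1) * p ^ (n + 1) ≤ c (n + 2)) :
    ∀ n : ℕ, p ^ (n + 1) - (p - 1) ^ (n + 1) ≤ c (n + 1) + c n := by
  intro n
  induction n with
  | zero =>
    simp only [zero_add, pow_one, h0]
    omega
  | succ n ih =>
    show p ^ (n + 2) - (p - 1) ^ (n + 2) ≤ c (n + 2) + c (n + 1)
    have hle : (p - 1) ^ (n + 1) ≤ p ^ (n + 1) := Nat.pow_le_pow_left (by omega) _
    have hle2 : (p - 1) ^ (n + 1) ≤ (p - 1) ^ (n + 2) :=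
      Nat.pow_le_pow_right (by omega) (by omega)
    have hpow : p ^ (n + 2) = p * p ^ (n + 1) := pow_succ' p (n + 1)
    have hsub : (p - 1) * p ^ (n + 1) = p * p ^ (n + 1) - p ^ (n + 1) := by
      rw [Nat.sub_mul, one_mul]
    have hmul : p ^ (n + 1) ≤ p * p ^ (n + 1) :=
      Nat.le_mul_of_pos_left _ (by omega)
    have := h2 n
    omega
end
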